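/- arXiv:2004.06834 — 2 statements merged into one kernel-verified Lean document; each statement's English description precedes it below -/
import Mathlib

section
/- Let n ≥ 1, let ℓ ≥ 3 be an integer, set θ = 2π/2^ℓ, and let S be a stabilizer group on n qubits with code projector Π_S. For z ∈ F₂ⁿ such that ε E(0,z) ∈ S for some sign ε ∈ {±1}, let ε_z denote that (unique) sign. For each element ε E(a,b) ∈ S with a ≠ 0, let Z_a = { v ∈ F₂ⁿ : v ⪯ a and ε_v E(0,v) ∈ S for some sign ε_v } and W_a = { y ∈ F₂ⁿ : y ⪯ a and y ∉ Z_a }. Then τ_{Iₙ}^{(ℓ)} Π_S (τ_{Iₙ}^{(ℓ)})† = Π_S if and only if, for every element ε E(a,b) ∈ S with a ≠ 0: Σ_{v ∈ Z_a} ε_v (i tan θ)^{w_H(v)} = (sec θ)^{w_H(a)}, and for every y ∈ W_a, Σ_{v ∈ Z_a} ε_v (i tan θ)^{w_H(v ⊕ y)} = 0. -/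
open Matrix
open scoped Classical

noncomputable section

/-- The Hermitian Pauli matrix `E(a,b)` on `n` qubits. -/
def PauliE {n : ℕ} (a b : Fin n → ZMod 2) :
    Matrix (Fin n → ZMod 2) (Fin n → ZMod 2) ℂ :=
  Matrix.of fun u v =>
    Complex.I ^ ((∑ i, (a i).val * (b i).val) % 4) *
      (-1 : ℂ) ^ (∑ i, (v i).val * (b i).val) *
      (if u = v + a then (1 : ℂ) else 0)

/-- Hamming weight of a binary vector. -/
def wHam {n : ℕ} (a : Fin n → ZMod 2) : ℕ := ∑ i, (a i).val

/-- The transversal `Z`-rotation `τ_{Iₙ}^{(ℓ)}`: the diagonal matrix with `(v,v)`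
entry `ξ_ℓ^{w_H(v)}`, where `ξ_ℓ = e^{2πi/2^ℓ}`. -/
def tauI (n ℓ : ℕ) : Matrix (Fin n → ZMod 2) (Fin n → ZMod 2) ℂ :=
  Matrix.diagonal fun v =>
    Complex.exp (2 * (Real.pi : ℂ) * Complex.I / 2 ^ ℓ) ^ wHam v

/-- `Z_a`: the set of binary vectors supported on `a` whose pure-`Z` Pauli
`± E(0,z)` belongs to the stabilizer `S`. -/
def Zsupp {n : ℕ} (S : Finset (Matrix (Fin n → ZMod 2) (Fin n → ZMod 2) ℂ))
    (a : Fin n → ZMod 2) : Set (Fin n → ZMod 2) :=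
  {z | (∀ i, a i = 0 → z i = 0) ∧
    ∃ ε : ℂ, (ε = 1 ∨ ε = -1) ∧ ε • PauliE 0 z ∈ S}

namespace TZR

variable {n : ℕ}

lemma zmod2_em (x : ZMod 2) : x = 0 ∨ x = 1 := by revert x; decide

def dotp {n : ℕ} (v y : Fin n → ZMod 2) : ℕ := ∑ i, (v i).val * (y i).val

lemma dotp_comm (v y : Fin n → ZMod 2) : dotp v y = dotp y v := by
  unfold dotp; exact Finset.sum_congr rfl fun i _ => mul_comm _ _

lemma dotp_zero_left (v : Fin n → ZMod 2) : dotp 0 v = 0 := by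
  unfold dotp; simp

lemma npow_coord (x y z : ZMod 2) :
    (-1 : ℂ) ^ (x.val * (y + z).val) = (-1) ^ (x.val * y.val) * (-1) ^ (x.val * z.val) := by
  rcases zmod2_em x with h | h <;> rcases zmod2_em y with h' | h' <;>
    rcases zmod2_em z with h'' | h'' <;> subst h h' h'' <;> norm_num [ZMod.val_one, ZMod.val_zero, show ZMod.val (2:ZMod 2) = 0 from rfl]

lemma npow_dotp (v y : Fin n → ZMod 2) :
    (-1 : ℂ) ^ dotp v y = ∏ i, (-1 : ℂ) ^ ((v i).val * (y i).val) := by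
  rw [dotp, Finset.prod_pow_eq_pow_sum]

lemma npow_dotp_add_right (v y z : Fin n → ZMod 2) :
    (-1 : ℂ) ^ dotp v (y + z) = (-1) ^ dotp v y * (-1) ^ dotp v z := by
  rw [npow_dotp, npow_dotp, npow_dotp, ← Finset.prod_mul_distrib]
  exact Finset.prod_congr rfl fun i _ => npow_coord _ _ _

lemma npow_dotp_add_left (v y z : Fin n → ZMod 2) :
    (-1 : ℂ) ^ dotp (y + z) v = (-1) ^ dotp y v * (-1) ^ dotp z v := by
  rw [dotp_comm, npow_dotp_add_right, dotp_comm v y, dotp_comm v z]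

lemma add_self_zero (v : Fin n → ZMod 2) : v + v = 0 := by
  funext i; exact CharTwo.add_self_eq_zero _

lemma add_add_cancel (a v : Fin n → ZMod 2) : a + (a + v) = v := by
  rw [← add_assoc, add_self_zero, zero_add]

lemma dotp_zero_right (v : Fin n → ZMod 2) : dotp v 0 = 0 := by
  rw [dotp_comm, dotp_zero_left]

lemma sq_neg_one_pow (k : ℕ) : ((-1 : ℂ) ^ k) * ((-1 : ℂ) ^ k) = 1 := by
  rw [← pow_add, neg_one_pow_eq_pow_mod_two, (show (k + k) % 2 = 0 by omega), pow_zero]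

lemma phase_sq (m : ℕ) :
    (Complex.I ^ (m % 4)) * (Complex.I ^ (m % 4)) * (-1 : ℂ) ^ m = 1 := by
  have h : Complex.I ^ (m % 4) * Complex.I ^ (m % 4) = ((-1 : ℂ)) ^ (m % 4) := by
    rw [← pow_add, ← two_mul, pow_mul, Complex.I_sq]
  rw [h, ← pow_add, neg_one_pow_eq_pow_mod_two, (show (m % 4 + m) % 2 = 0 by omega), pow_zero]

lemma pauli_apply (a b u v : Fin n → ZMod 2) :
    PauliE a b u v = Complex.I ^ (dotp a b % 4) * (-1 : ℂ) ^ dotp v b *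
      (if u = v + a then 1 else 0) := rfl

lemma pauli_zero_zero : PauliE (0 : Fin n → ZMod 2) 0 = 1 := by
  ext u v
  rw [pauli_apply]
  simp [dotp_zero_left, dotp_zero_right, Matrix.one_apply]

lemma pauli_mul_self (a b : Fin n → ZMod 2) : PauliE a b * PauliE a b = 1 := by
  have key : ∀ c d e : ℂ, c * c * e = 1 → d * d = 1 →
      c * (d * e) * 1 * (c * d * 1) = 1 := by
    intro c d e h1 h2
    linear_combination (d * d) * h1 + h2
  ext u v
  rw [Matrix.mul_apply, Finset.sum_eq_single_of_mem (v + a) (Finset.mem_univ _)]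
  · have hva : v + a + a = v := by rw [add_assoc, add_self_zero, add_zero]
    rw [pauli_apply a b u (v + a), pauli_apply a b (v + a) v, hva, if_pos rfl]
    rcases eq_or_ne u v with h | h
    · subst h
      rw [if_pos rfl, Matrix.one_apply_eq, npow_dotp_add_left b _ a]
      exact key _ _ _ (phase_sq _) (sq_neg_one_pow _)
    · rw [if_neg h, Matrix.one_apply_ne h]; ring
  · intro w _ hw
    rw [pauli_apply a b w v, if_neg (fun h => hw h), mul_zero, mul_zero]

lemma pauli_Z_mul (z z' : Fin n → ZMod 2) :
    PauliE 0 z * PauliE 0 z' = PauliE 0 (z + z') := by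
  ext u v
  rw [Matrix.mul_apply, Finset.sum_eq_single_of_mem v (Finset.mem_univ _)]
  · rw [pauli_apply 0 z u v, pauli_apply 0 z' v v, pauli_apply 0 (z + z') u v]
    simp only [dotp_zero_left, Nat.zero_mod, pow_zero, one_mul, add_zero, if_pos rfl,
      npow_dotp_add_right, eq_self_iff_true, if_true]
    ring
  · intro w _ hw
    rw [pauli_apply 0 z' w v, if_neg (by simpa using hw), mul_zero, mul_zero]

lemma dotp_single (i : Fin n) (b : Fin n → ZMod 2) :
    dotp (fun j => if j = i then (1 : ZMod 2) else 0) b = (b i).val := by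
  unfold dotp
  rw [Finset.sum_eq_single_of_mem i (Finset.mem_univ _)]
  · simp [ZMod.val_one]
  · intro j _ hj; simp [hj]

lemma pauli_smul_inj {a b a' b' : Fin n → ZMod 2} {ε ε' : ℂ}
    (h : ε • PauliE a b = ε' • PauliE a' b') (hε' : ε' ≠ 0) :
    a = a' ∧ b = b' ∧ ε = ε' := by
  have hI : ∀ m : ℕ, Complex.I ^ (m % 4) ≠ 0 := fun m => pow_ne_zero _ Complex.I_ne_zero
  have hent : ∀ u v, ε * PauliE a b u v = ε' * PauliE a' b' u v := by
    intro u v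
    have := congrFun (congrFun h u) v
    simpa [Matrix.smul_apply] using this
  have haa : a = a' := by
    by_contra hne
    have h1 := hent a' 0
    rw [pauli_apply, pauli_apply, if_pos (zero_add a').symm] at h1
    rw [if_neg (fun hh : a' = 0 + a => hne (by rw [zero_add] at hh; exact hh.symm))] at h1
    rw [mul_zero, mul_zero, mul_one] at h1
    exact (mul_ne_zero hε' (mul_ne_zero (hI _) (pow_ne_zero _ (by norm_num)))) h1.symm
  subst haa
  have hdiag : ∀ v, ε * (Complex.I ^ (dotp a b % 4) * (-1 : ℂ) ^ dotp v b) =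
      ε' * (Complex.I ^ (dotp a b' % 4) * (-1 : ℂ) ^ dotp v b') := by
    intro v
    have h1 := hent (v + a) v
    rw [pauli_apply, pauli_apply, if_pos rfl] at h1
    simpa using h1
  have h0 := hdiag 0
  simp only [dotp_zero_left, pow_zero, mul_one] at h0
  have hc0 : ε' * Complex.I ^ (dotp a b' % 4) ≠ 0 := mul_ne_zero hε' (hI _)
  have hbb : b = b' := by
    funext i
    have h1 := hdiag (fun j => if j = i then (1 : ZMod 2) else 0)
    rw [dotp_single, dotp_single] at h1
    have h2 : (ε * Complex.I ^ (dotp a b % 4)) * (-1 : ℂ) ^ (b i).val =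
        (ε' * Complex.I ^ (dotp a b' % 4)) * (-1 : ℂ) ^ (b' i).val := by
      linear_combination h1
    rw [h0] at h2
    have h3 : (-1 : ℂ) ^ (b i).val = (-1 : ℂ) ^ (b' i).val :=
      mul_left_cancel₀ hc0 h2
    rcases zmod2_em (b i) with hb | hb <;> rcases zmod2_em (b' i) with hb' | hb' <;>
      rw [hb, hb'] at h3 ⊢ <;>
      first
        | rfl
        | norm_num [ZMod.val_zero, ZMod.val_one] at h3
  subst hbb
  exact ⟨rfl, rfl, mul_right_cancel₀ (hI _) h0⟩

def xi (θ : ℝ) : ℂ := (Real.cos θ : ℂ) + Complex.I * (Real.sin θ : ℂ)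

lemma xi_mul_conj (θ : ℝ) :
    xi θ * ((Real.cos θ : ℂ) - Complex.I * (Real.sin θ : ℂ)) = 1 := by
  unfold xi
  have h : ((Real.sin θ : ℂ)) * (Real.sin θ : ℂ) + (Real.cos θ : ℂ) * (Real.cos θ : ℂ) = 1 := by
    norm_cast
    rw [← Real.sin_sq_add_cos_sq θ]; ring
  linear_combination h - (Real.sin θ : ℂ) * (Real.sin θ : ℂ) * Complex.I_sq

lemma xi_ne_zero (θ : ℝ) : xi θ ≠ 0 :=
  left_ne_zero_of_mul_eq_one (xi_mul_conj θ)

lemma xi_coord (θ : ℝ) (x t : ZMod 2) :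
    xi θ ^ ((x + t).val) = xi θ ^ x.val *
      (if t = 0 then 1 else ((Real.cos θ : ℂ) + Complex.I * (Real.sin θ : ℂ) * (-1 : ℂ) ^ x.val)) := by
  rcases zmod2_em x with hx | hx <;> rcases zmod2_em t with ht | ht <;> subst hx ht
  · simp
  · rw [if_neg (by decide), (show ((0 : ZMod 2) + 1).val = 1 from rfl), ZMod.val_zero]
    simp [xi]
  · simp
  · rw [if_neg (by decide), (show ((1 : ZMod 2) + 1).val = 0 from rfl), ZMod.val_one]
    have h := xi_mul_conj θ
    rw [pow_zero, pow_one, pow_one]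
    unfold xi at h ⊢
    linear_combination -h

lemma xi_wham (θ : ℝ) (a v : Fin n → ZMod 2) :
    xi θ ^ wHam (v + a) = xi θ ^ wHam v *
      ∏ i, (if a i = 0 then 1
        else ((Real.cos θ : ℂ) + Complex.I * (Real.sin θ : ℂ) * (-1 : ℂ) ^ (v i).val)) := by
  rw [wHam, wHam, ← Finset.prod_pow_eq_pow_sum, ← Finset.prod_pow_eq_pow_sum,
    ← Finset.prod_mul_distrib]
  exact Finset.prod_congr rfl fun i _ => xi_coord θ (v i) (a i)

def kcoef (θ : ℝ) (ai t : ZMod 2) : ℂ :=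
  if ai = 0 then (if t = 0 then 1 else 0)
  else (if t = 0 then (Real.cos θ : ℂ) else Complex.I * (Real.sin θ : ℂ))

lemma zmod2_univ : (Finset.univ : Finset (ZMod 2)) = {0, 1} := by decide

lemma h_expand (θ : ℝ) (ai x : ZMod 2) :
    (if ai = 0 then (1 : ℂ)
      else ((Real.cos θ : ℂ) + Complex.I * (Real.sin θ : ℂ) * (-1 : ℂ) ^ x.val)) =
    ∑ t : ZMod 2, kcoef θ ai t * (-1 : ℂ) ^ (x.val * t.val) := by
  rw [zmod2_univ, Finset.sum_pair (by decide : (0 : ZMod 2) ≠ 1)]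
  rcases zmod2_em ai with h | h <;> subst h <;>
    simp [kcoef, ZMod.val_zero, ZMod.val_one]

def Ccoef (θ : ℝ) {n : ℕ} (a x : Fin n → ZMod 2) : ℂ :=
  ∏ i, ((Real.cos θ : ℂ) ^ ((a i).val - (x i).val) *
    (Complex.I * (Real.sin θ : ℂ)) ^ ((x i).val))

lemma kprod (θ : ℝ) (a c : Fin n → ZMod 2) :
    ∏ i, kcoef θ (a i) (c i) =
      if (∀ i, a i = 0 → c i = 0) then Ccoef θ a c else 0 := by
  split_ifs with h
  · exact Finset.prod_congr rfl fun i _ => by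
      rcases zmod2_em (a i) with ha | ha
      · rw [ha, (h i ha)]
        simp [kcoef]
      · rcases zmod2_em (c i) with hc | hc <;>
          rw [ha, hc] <;> simp [kcoef, ZMod.val_zero, ZMod.val_one]
  · push_neg at h
    obtain ⟨i, hai, hci⟩ := h
    refine Finset.prod_eq_zero (Finset.mem_univ i) ?_
    rw [hai, kcoef, if_pos rfl, if_neg hci]

lemma prod_h_eq_sum (θ : ℝ) (a v : Fin n → ZMod 2) :
    (∏ i, (if a i = 0 then (1 : ℂ)
      else ((Real.cos θ : ℂ) + Complex.I * (Real.sin θ : ℂ) * (-1 : ℂ) ^ (v i).val))) =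
    ∑ c : Fin n → ZMod 2,
      (if (∀ i, a i = 0 → c i = 0) then Ccoef θ a c else 0) * (-1 : ℂ) ^ dotp v c := by
  calc (∏ i, (if a i = 0 then (1 : ℂ)
      else ((Real.cos θ : ℂ) + Complex.I * (Real.sin θ : ℂ) * (-1 : ℂ) ^ (v i).val)))
      = ∏ i, ∑ t : ZMod 2, kcoef θ (a i) t * (-1 : ℂ) ^ ((v i).val * t.val) :=
        Finset.prod_congr rfl fun i _ => h_expand θ (a i) (v i)
    _ = ∑ c : Fin n → ZMod 2, ∏ i, (kcoef θ (a i) (c i) * (-1 : ℂ) ^ ((v i).val * (c i).val)) :=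
        Fintype.prod_sum _
    _ = ∑ c : Fin n → ZMod 2,
        (if (∀ i, a i = 0 → c i = 0) then Ccoef θ a c else 0) * (-1 : ℂ) ^ dotp v c := by
        refine Finset.sum_congr rfl fun c _ => ?_
        rw [Finset.prod_mul_distrib, kprod, npow_dotp]

lemma orth (z : Fin n → ZMod 2) :
    ∑ v : Fin n → ZMod 2, (-1 : ℂ) ^ dotp v z = if z = 0 then ((2 : ℂ) ^ n) else 0 := by
  split_ifs with h
  · subst h
    simp only [dotp_zero_right, pow_zero, Finset.sum_const, Finset.card_univ, nsmul_eq_mul,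
      mul_one]
    rw [Fintype.card_fun]
    push_cast [ZMod.card, Fintype.card_fin]
    ring
  · obtain ⟨i0, hi0⟩ : ∃ i, z i ≠ 0 := by
      by_contra hc; push_neg at hc; exact h (funext hc)
    have hz1 : z i0 = 1 := (zmod2_em _).resolve_left hi0
    set e : Fin n → ZMod 2 := fun j => if j = i0 then 1 else 0 with he
    have key : ∀ v, (-1 : ℂ) ^ dotp (v + e) z = -((-1) ^ dotp v z) := by
      intro v
      rw [npow_dotp_add_left z v e, he, dotp_single, hz1, ZMod.val_one]
      ring
    have hbij : ∑ v : Fin n → ZMod 2, (-1 : ℂ) ^ dotp (v + e) z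
        = ∑ v : Fin n → ZMod 2, (-1 : ℂ) ^ dotp v z :=
      Fintype.sum_equiv (Equiv.addRight e) _ _ (fun v => rfl)
    have h2 : ∑ v : Fin n → ZMod 2, (-1 : ℂ) ^ dotp v z
        = -∑ v : Fin n → ZMod 2, (-1 : ℂ) ^ dotp v z := by
      calc (∑ v : Fin n → ZMod 2, (-1:ℂ) ^ dotp v z)
          = ∑ v : Fin n → ZMod 2, (-1:ℂ) ^ dotp (v + e) z := hbij.symm
        _ = ∑ v : Fin n → ZMod 2, -((-1:ℂ) ^ dotp v z) := Finset.sum_congr rfl fun v _ => key v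
        _ = -∑ v : Fin n → ZMod 2, (-1:ℂ) ^ dotp v z := by simp
    have h3 : (2 : ℂ) * ∑ v : Fin n → ZMod 2, (-1 : ℂ) ^ dotp v z = 0 := by
      linear_combination h2
    exact (mul_eq_zero.mp h3).resolve_left (by norm_num)

lemma fourier_inv (f : (Fin n → ZMod 2) → ℂ)
    (h : ∀ v, ∑ y : Fin n → ZMod 2, f y * (-1 : ℂ) ^ dotp v y = 0) :
    ∀ y, f y = 0 := by
  intro y0
  have hsum : ∑ v : Fin n → ZMod 2,
      (∑ y : Fin n → ZMod 2, f y * (-1 : ℂ) ^ dotp v y) * (-1 : ℂ) ^ dotp v y0 = 0 :=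
    Finset.sum_eq_zero fun v _ => by rw [h v, zero_mul]
  have hswap : ∑ v : Fin n → ZMod 2,
      (∑ y : Fin n → ZMod 2, f y * (-1 : ℂ) ^ dotp v y) * (-1 : ℂ) ^ dotp v y0
      = ∑ y : Fin n → ZMod 2, f y * ∑ v : Fin n → ZMod 2, (-1 : ℂ) ^ dotp v (y + y0) := by
    simp_rw [Finset.sum_mul]
    rw [Finset.sum_comm]
    refine Finset.sum_congr rfl fun y _ => ?_
    rw [Finset.mul_sum]
    refine Finset.sum_congr rfl fun v _ => ?_
    rw [npow_dotp_add_right]; ring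
  rw [hswap] at hsum
  have hred : ∑ y : Fin n → ZMod 2, f y * ∑ v : Fin n → ZMod 2, (-1 : ℂ) ^ dotp v (y + y0)
      = f y0 * 2 ^ n := by
    have hterm : ∀ y : Fin n → ZMod 2,
        f y * (∑ v : Fin n → ZMod 2, (-1 : ℂ) ^ dotp v (y + y0))
        = if y = y0 then f y * 2 ^ n else 0 := by
      intro y
      rw [orth]
      by_cases hy : y = y0
      · subst hy; rw [if_pos (add_self_zero y), if_pos rfl]
      · rw [if_neg ?_, if_neg hy, mul_zero]
        intro hz
        apply hy
        have := congrArg (fun w => w + y0) hz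
        simpa [add_assoc, add_self_zero] using this
    rw [Finset.sum_congr rfl fun y _ => hterm y,
      Finset.sum_ite_eq' Finset.univ y0 (fun y => f y * 2 ^ n)]
    simp
  rw [hred] at hsum
  exact (mul_eq_zero.mp hsum).resolve_right (pow_ne_zero n (by norm_num))

section stab

variable {S : Finset (Matrix (Fin n → ZMod 2) (Fin n → ZMod 2) ℂ)}
variable {eps : (Fin n → ZMod 2) → ℂ}

lemma sign_unique (hmul : ∀ M ∈ S, ∀ M' ∈ S, M * M' ∈ S)
    (hneg : -(1 : Matrix (Fin n → ZMod 2) (Fin n → ZMod 2) ℂ) ∉ S)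
    {c c' : ℂ} {z : Fin n → ZMod 2} (hc : c = 1 ∨ c = -1) (hc' : c' = 1 ∨ c' = -1)
    (h : c • PauliE 0 z ∈ S) (h' : c' • PauliE 0 z ∈ S) : c = c' := by
  by_contra hne
  have hprod := hmul _ h _ h'
  have heq : (c • PauliE 0 z) * (c' • PauliE 0 z) = (c * c') • (PauliE 0 z * PauliE 0 z) := by
    rw [Matrix.smul_mul, Matrix.mul_smul, smul_smul]
  have hEE : PauliE (0:Fin n → ZMod 2) z * PauliE 0 z = 1 := pauli_mul_self 0 z
  have hcc : c * c' = -1 := by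
    rcases hc with h1 | h1 <;> rcases hc' with h2 | h2 <;> subst h1 h2 <;>
      first | (exfalso; exact hne rfl) | norm_num
  rw [heq, hEE, hcc, neg_smul, one_smul] at hprod
  exact hneg hprod

def Zf (S : Finset (Matrix (Fin n → ZMod 2) (Fin n → ZMod 2) ℂ))
    (eps : (Fin n → ZMod 2) → ℂ) : Finset (Fin n → ZMod 2) :=
  Finset.univ.filter (fun z => eps z • PauliE 0 z ∈ S ∧ (eps z = 1 ∨ eps z = -1))

lemma mem_Zf_iff
    (heps : ∀ z : Fin n → ZMod 2,
      (∃ ε : ℂ, (ε = 1 ∨ ε = -1) ∧ ε • PauliE 0 z ∈ S) →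
      (eps z = 1 ∨ eps z = -1) ∧ eps z • PauliE 0 z ∈ S)
    (z : Fin n → ZMod 2) :
    z ∈ Zf S eps ↔ ∃ ε : ℂ, (ε = 1 ∨ ε = -1) ∧ ε • PauliE 0 z ∈ S := by
  constructor
  · intro hz
    rw [Zf, Finset.mem_filter] at hz
    exact ⟨eps z, hz.2.2, hz.2.1⟩
  · intro hz
    have := heps z hz
    rw [Zf, Finset.mem_filter]
    exact ⟨Finset.mem_univ _, this.2, this.1⟩

lemma diag_mem (hmul : ∀ M ∈ S, ∀ M' ∈ S, M * M' ∈ S)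
    (hneg : -(1 : Matrix (Fin n → ZMod 2) (Fin n → ZMod 2) ℂ) ∉ S)
    (heps : ∀ z : Fin n → ZMod 2,
      (∃ ε : ℂ, (ε = 1 ∨ ε = -1) ∧ ε • PauliE 0 z ∈ S) →
      (eps z = 1 ∨ eps z = -1) ∧ eps z • PauliE 0 z ∈ S)
    {ε : ℂ} {b : Fin n → ZMod 2} (hε : ε = 1 ∨ ε = -1) (hM : ε • PauliE 0 b ∈ S) :
    b ∈ Zf S eps ∧ eps b = ε := by
  have hz := heps b ⟨ε, hε, hM⟩
  refine ⟨Finset.mem_filter.mpr ⟨Finset.mem_univ _, hz.2, hz.1⟩, ?_⟩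
  exact sign_unique hmul hneg hz.1 hε hz.2 hM

lemma eps_sign {z : Fin n → ZMod 2} (hz : z ∈ Zf S eps) : eps z = 1 ∨ eps z = -1 :=
  (Finset.mem_filter.mp hz).2.2

lemma eps_mem {z : Fin n → ZMod 2} (hz : z ∈ Zf S eps) : eps z • PauliE 0 z ∈ S :=
  (Finset.mem_filter.mp hz).2.1

lemma eps_ne_zero {z : Fin n → ZMod 2} (hz : z ∈ Zf S eps) : eps z ≠ 0 := by
  rcases eps_sign hz with h | h <;> rw [h] <;> norm_num

lemma eps_sq {z : Fin n → ZMod 2} (hz : z ∈ Zf S eps) : eps z * eps z = 1 := by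
  rcases eps_sign hz with h | h <;> rw [h] <;> norm_num

lemma Zf_zero
    (hone : (1 : Matrix (Fin n → ZMod 2) (Fin n → ZMod 2) ℂ) ∈ S)
    (hmul : ∀ M ∈ S, ∀ M' ∈ S, M * M' ∈ S)
    (hneg : -(1 : Matrix (Fin n → ZMod 2) (Fin n → ZMod 2) ℂ) ∉ S)
    (heps : ∀ z : Fin n → ZMod 2,
      (∃ ε : ℂ, (ε = 1 ∨ ε = -1) ∧ ε • PauliE 0 z ∈ S) →
      (eps z = 1 ∨ eps z = -1) ∧ eps z • PauliE 0 z ∈ S) :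
    (0 : Fin n → ZMod 2) ∈ Zf S eps ∧ eps 0 = 1 := by
  have h1 : (1 : ℂ) • PauliE (0 : Fin n → ZMod 2) 0 ∈ S := by
    rw [one_smul, pauli_zero_zero]; exact hone
  exact diag_mem hmul hneg heps (Or.inl rfl) h1

lemma Zf_add (hmul : ∀ M ∈ S, ∀ M' ∈ S, M * M' ∈ S)
    (hneg : -(1 : Matrix (Fin n → ZMod 2) (Fin n → ZMod 2) ℂ) ∉ S)
    (heps : ∀ z : Fin n → ZMod 2,
      (∃ ε : ℂ, (ε = 1 ∨ ε = -1) ∧ ε • PauliE 0 z ∈ S) →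
      (eps z = 1 ∨ eps z = -1) ∧ eps z • PauliE 0 z ∈ S)
    {z z' : Fin n → ZMod 2} (hz : z ∈ Zf S eps) (hz' : z' ∈ Zf S eps) :
    (z + z') ∈ Zf S eps ∧ eps (z + z') = eps z * eps z' := by
  have hmem : (eps z * eps z') • PauliE 0 (z + z') ∈ S := by
    have h := hmul _ (eps_mem hz) _ (eps_mem hz')
    rwa [Matrix.smul_mul, Matrix.mul_smul, smul_smul, pauli_Z_mul] at h
  have hsign : eps z * eps z' = 1 ∨ eps z * eps z' = -1 := by
    rcases eps_sign hz with h1 | h1 <;> rcases eps_sign hz' with h2 | h2 <;>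
      rw [h1, h2] <;> norm_num
  exact diag_mem hmul hneg heps hsign hmem

lemma diag_sum
    (hform : ∀ M ∈ S, ∃ ε : ℂ, (ε = 1 ∨ ε = -1) ∧
      ∃ a b : Fin n → ZMod 2, M = ε • PauliE a b)
    (hmul : ∀ M ∈ S, ∀ M' ∈ S, M * M' ∈ S)
    (hneg : -(1 : Matrix (Fin n → ZMod 2) (Fin n → ZMod 2) ℂ) ∉ S)
    (heps : ∀ z : Fin n → ZMod 2,
      (∃ ε : ℂ, (ε = 1 ∨ ε = -1) ∧ ε • PauliE 0 z ∈ S) →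
      (eps z = 1 ∨ eps z = -1) ∧ eps z • PauliE 0 z ∈ S)
    (w : Fin n → ZMod 2) :
    ∑ M ∈ S, M w w = ∑ z ∈ Zf S eps, eps z * (-1 : ℂ) ^ dotp w z := by
  have hside : ∀ M ∈ S, M w w ≠ 0 → (∃ z, M = eps z • PauliE 0 z) := by
    intro M hM hMw
    obtain ⟨ε, hε, a, b, rfl⟩ := hform M hM
    have ha : a = 0 := by
      by_contra ha
      apply hMw
      rw [Matrix.smul_apply, pauli_apply, if_neg ?_, mul_zero, smul_zero]
      intro hc
      exact ha (left_eq_add.mp hc)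
    subst ha
    obtain ⟨hbZ, hbe⟩ := diag_mem hmul hneg heps hε (by assumption)
    exact ⟨b, by rw [hbe]⟩
  rw [← Finset.sum_filter_of_ne hside]
  refine (Finset.sum_bij (fun z _ => eps z • PauliE 0 z) ?_ ?_ ?_ ?_).symm
  · intro z hz
    refine Finset.mem_filter.mpr ⟨eps_mem hz, z, rfl⟩
  · intro z hz z' hz' heq
    exact (pauli_smul_inj heq (eps_ne_zero hz')).2.1
  · intro M hM
    obtain ⟨hMS, z, rfl⟩ := Finset.mem_filter.mp hM
    obtain ⟨ε', hε', a', b', hM'⟩ := hform _ hMS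
    have hε'0 : ε' ≠ 0 := by rcases hε' with h | h <;> rw [h] <;> norm_num
    obtain ⟨ha', hb', hee⟩ := pauli_smul_inj hM' hε'0
    have hzZ : z ∈ Zf S eps :=
      Finset.mem_filter.mpr ⟨Finset.mem_univ _, hMS, hee ▸ hε'⟩
    exact ⟨z, hzZ, rfl⟩
  · intro z hz
    show eps z * (-1 : ℂ) ^ dotp w z = (eps z • PauliE 0 z) w w
    rw [Matrix.smul_apply, pauli_apply, dotp_zero_left, if_pos (add_zero w).symm]
    simp
lemma smul_pauli_sq {ε : ℂ} (hε : ε = 1 ∨ ε = -1) (a b : Fin n → ZMod 2) :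
    (ε • PauliE a b) * (ε • PauliE a b) = 1 := by
  rw [Matrix.smul_mul, Matrix.mul_smul, smul_smul, pauli_mul_self]
  rcases hε with h | h <;> rw [h] <;> norm_num

lemma sum_shift {S : Finset (Matrix (Fin n → ZMod 2) (Fin n → ZMod 2) ℂ)}
    (hmul : ∀ M ∈ S, ∀ M' ∈ S, M * M' ∈ S)
    {ε : ℂ} {a b : Fin n → ZMod 2} (hε : ε = 1 ∨ ε = -1) (hN : ε • PauliE a b ∈ S)
    (u v : Fin n → ZMod 2) :
    ∑ M ∈ S, M u v =
      (ε * Complex.I ^ (dotp a b % 4) * (-1 : ℂ) ^ dotp v b) * ∑ M ∈ S, M u (v + a) := by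
  set N := ε • PauliE a b with hNdef
  have hNN : N * N = 1 := smul_pauli_sq hε a b
  have hMN : ∀ M : Matrix (Fin n → ZMod 2) (Fin n → ZMod 2) ℂ,
      (M * N) u v = (ε * Complex.I ^ (dotp a b % 4) * (-1 : ℂ) ^ dotp v b) * M u (v + a) := by
    intro M
    rw [Matrix.mul_apply, Finset.sum_eq_single_of_mem (v + a) (Finset.mem_univ _)]
    · rw [hNdef, Matrix.smul_apply, pauli_apply, if_pos rfl]
      simp only [smul_eq_mul]
      ring
    · intro w _ hw
      rw [hNdef, Matrix.smul_apply, pauli_apply, if_neg (fun h => hw h), mul_zero,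
        smul_zero, mul_zero]
  have hbij : ∑ M ∈ S, M u v = ∑ M ∈ S, (M * N) u v := by
    refine Finset.sum_nbij' (fun M => M * N) (fun M => M * N) ?_ ?_ ?_ ?_ ?_
    · intro M hM; exact hmul _ hM _ hN
    · intro M hM; exact hmul _ hM _ hN
    · intro M _; show M * N * N = M; rw [mul_assoc, hNN, mul_one]
    · intro M _; show M * N * N = M; rw [mul_assoc, hNN, mul_one]
    · intro M _; show M u v = (M * N * N) u v; rw [mul_assoc, hNN, mul_one]
  rw [hbij, Finset.sum_congr rfl fun M _ => hMN M, ← Finset.mul_sum]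

lemma supp_add {a y x : Fin n → ZMod 2} (hy : ∀ i, a i = 0 → y i = 0) :
    (∀ i, a i = 0 → (x + y) i = 0) ↔ (∀ i, a i = 0 → x i = 0) := by
  constructor
  · intro h i hi
    have h1 := hy i hi
    have h2 := h i hi
    have : x i + y i = 0 := h2
    rwa [h1, add_zero] at this
  · intro h i hi
    have : x i + y i = x i + y i := rfl
    show x i + y i = 0
    rw [h i hi, hy i hi, add_zero]

lemma cos_tan (θ : ℝ) (hcos : Real.cos θ ≠ 0) :
    (Real.cos θ : ℂ) * (Complex.I * (Real.tan θ : ℂ)) = Complex.I * (Real.sin θ : ℂ) := by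
  have h : Real.cos θ * Real.tan θ = Real.sin θ := by
    rw [Real.tan_eq_sin_div_cos]; field_simp
  calc (Real.cos θ : ℂ) * (Complex.I * (Real.tan θ : ℂ))
      = Complex.I * ((Real.cos θ * Real.tan θ : ℝ) : ℂ) := by push_cast; ring
    _ = Complex.I * (Real.sin θ : ℂ) := by rw [h]

lemma Ccoef_eq (θ : ℝ) (hcos : Real.cos θ ≠ 0) (a x : Fin n → ZMod 2)
    (hx : ∀ i, a i = 0 → x i = 0) :
    Ccoef θ a x = (Real.cos θ : ℂ) ^ wHam a * (Complex.I * (Real.tan θ : ℂ)) ^ wHam x := by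
  rw [Ccoef, wHam, wHam, ← Finset.prod_pow_eq_pow_sum, ← Finset.prod_pow_eq_pow_sum,
    ← Finset.prod_mul_distrib]
  refine Finset.prod_congr rfl fun i _ => ?_
  rcases zmod2_em (x i) with h | h
  · rw [h, ZMod.val_zero, pow_zero, pow_zero, Nat.sub_zero, mul_one]
  · have ha : a i = 1 := by
      rcases zmod2_em (a i) with h' | h'
      · exfalso
        have := hx i h'
        rw [h] at this
        exact absurd this (by decide)
      · exact h'
    rw [h, ha, ZMod.val_one, Nat.sub_self, pow_zero, one_mul, pow_one, pow_one, pow_one]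
    rw [cos_tan θ hcos]

lemma core1 (θ : ℝ) (Z : Finset (Fin n → ZMod 2)) (ee : (Fin n → ZMod 2) → ℂ)
    (a v : Fin n → ZMod 2) :
    xi θ ^ wHam (v + a) * (∑ z ∈ Z, ee z * (-1 : ℂ) ^ dotp v z)
      = xi θ ^ wHam v * ∑ y : Fin n → ZMod 2,
          (∑ z ∈ Z, if (∀ i, a i = 0 → (z + y) i = 0) then ee z * Ccoef θ a (z + y) else 0) *
            (-1 : ℂ) ^ dotp v y := by
  have inner : ∀ z : Fin n → ZMod 2,
      (∑ c : Fin n → ZMod 2,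
        ((if (∀ i, a i = 0 → c i = 0) then Ccoef θ a c else 0) * (-1 : ℂ) ^ dotp v c) *
          (ee z * (-1 : ℂ) ^ dotp v z))
      = ∑ y : Fin n → ZMod 2,
          (if (∀ i, a i = 0 → (z + y) i = 0) then ee z * Ccoef θ a (z + y) else 0) *
            (-1 : ℂ) ^ dotp v y := by
    intro z
    refine Fintype.sum_equiv (Equiv.addLeft z) _ _ fun c => ?_
    show _ = (if (∀ i, a i = 0 → (z + (z + c)) i = 0)
        then ee z * Ccoef θ a (z + (z + c)) else 0) * (-1 : ℂ) ^ dotp v (z + c)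
    rw [add_add_cancel, npow_dotp_add_right]
    split_ifs <;> ring
  have key :
      (∑ c : Fin n → ZMod 2,
        (if (∀ i, a i = 0 → c i = 0) then Ccoef θ a c else 0) * (-1 : ℂ) ^ dotp v c) *
        (∑ z ∈ Z, ee z * (-1 : ℂ) ^ dotp v z)
      = ∑ y : Fin n → ZMod 2,
          (∑ z ∈ Z, if (∀ i, a i = 0 → (z + y) i = 0) then ee z * Ccoef θ a (z + y) else 0) *
            (-1 : ℂ) ^ dotp v y := by
    calc (∑ c : Fin n → ZMod 2,
        (if (∀ i, a i = 0 → c i = 0) then Ccoef θ a c else 0) * (-1 : ℂ) ^ dotp v c) *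
        (∑ z ∈ Z, ee z * (-1 : ℂ) ^ dotp v z)
        = ∑ c : Fin n → ZMod 2, ∑ z ∈ Z,
            ((if (∀ i, a i = 0 → c i = 0) then Ccoef θ a c else 0) * (-1 : ℂ) ^ dotp v c) *
              (ee z * (-1 : ℂ) ^ dotp v z) := by
          rw [Finset.sum_mul]
          exact Finset.sum_congr rfl fun c _ => Finset.mul_sum _ _ _
      _ = ∑ z ∈ Z, ∑ c : Fin n → ZMod 2,
            ((if (∀ i, a i = 0 → c i = 0) then Ccoef θ a c else 0) * (-1 : ℂ) ^ dotp v c) *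
              (ee z * (-1 : ℂ) ^ dotp v z) := Finset.sum_comm
      _ = ∑ z ∈ Z, ∑ y : Fin n → ZMod 2,
            (if (∀ i, a i = 0 → (z + y) i = 0) then ee z * Ccoef θ a (z + y) else 0) *
              (-1 : ℂ) ^ dotp v y := Finset.sum_congr rfl fun z _ => inner z
      _ = ∑ y : Fin n → ZMod 2, ∑ z ∈ Z,
            (if (∀ i, a i = 0 → (z + y) i = 0) then ee z * Ccoef θ a (z + y) else 0) *
              (-1 : ℂ) ^ dotp v y := Finset.sum_comm
      _ = ∑ y : Fin n → ZMod 2,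
          (∑ z ∈ Z, if (∀ i, a i = 0 → (z + y) i = 0) then ee z * Ccoef θ a (z + y) else 0) *
            (-1 : ℂ) ^ dotp v y :=
          Finset.sum_congr rfl fun y _ => (Finset.sum_mul _ _ _).symm
  rw [xi_wham θ a v, prod_h_eq_sum θ a v, mul_assoc, key]

def Hfun (S : Finset (Matrix (Fin n → ZMod 2) (Fin n → ZMod 2) ℂ))
    (eps : (Fin n → ZMod 2) → ℂ) (θ : ℝ) (a y : Fin n → ZMod 2) : ℂ :=
  ∑ z ∈ Zf S eps, if (∀ i, a i = 0 → (z + y) i = 0) then eps z * Ccoef θ a (z + y) else 0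

lemma core1' (θ : ℝ) (a v : Fin n → ZMod 2) :
    xi θ ^ wHam (v + a) * (∑ z ∈ Zf S eps, eps z * (-1 : ℂ) ^ dotp v z)
      = xi θ ^ wHam v * ∑ y : Fin n → ZMod 2,
          Hfun S eps θ a y * (-1 : ℂ) ^ dotp v y :=
  core1 θ (Zf S eps) eps a v

lemma Hshift (hmul : ∀ M ∈ S, ∀ M' ∈ S, M * M' ∈ S)
    (hneg : -(1 : Matrix (Fin n → ZMod 2) (Fin n → ZMod 2) ℂ) ∉ S)
    (heps : ∀ z : Fin n → ZMod 2,
      (∃ ε : ℂ, (ε = 1 ∨ ε = -1) ∧ ε • PauliE 0 z ∈ S) →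
      (eps z = 1 ∨ eps z = -1) ∧ eps z • PauliE 0 z ∈ S)
    (θ : ℝ) (a : Fin n → ZMod 2) {z0 : Fin n → ZMod 2} (hz0 : z0 ∈ Zf S eps)
    (y : Fin n → ZMod 2) :
    Hfun S eps θ a (z0 + y) = eps z0 * Hfun S eps θ a y := by
  rw [Hfun, Hfun, Finset.mul_sum]
  refine Finset.sum_nbij' (fun z => z0 + z) (fun z => z0 + z) ?_ ?_ ?_ ?_ ?_
  · intro z hz; exact (Zf_add hmul hneg heps hz0 hz).1
  · intro z hz; exact (Zf_add hmul hneg heps hz0 hz).1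
  · intro z _; exact add_add_cancel z0 z
  · intro z _; exact add_add_cancel z0 z
  · intro z hz
    show (if (∀ i, a i = 0 → (z + (z0 + y)) i = 0)
        then eps z * Ccoef θ a (z + (z0 + y)) else 0)
      = eps z0 * (if (∀ i, a i = 0 → ((z0 + z) + y) i = 0)
        then eps (z0 + z) * Ccoef θ a ((z0 + z) + y) else 0)
    have hxy : z + (z0 + y) = (z0 + z) + y := by
      rw [← add_assoc, add_comm z z0]
    rw [hxy, (Zf_add hmul hneg heps hz0 hz).2]
    rcases eps_sign hz0 with h | h <;> rw [h] <;> split_ifs <;> ring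

lemma core2 (hmul : ∀ M ∈ S, ∀ M' ∈ S, M * M' ∈ S)
    (hneg : -(1 : Matrix (Fin n → ZMod 2) (Fin n → ZMod 2) ℂ) ∉ S)
    (heps : ∀ z : Fin n → ZMod 2,
      (∃ ε : ℂ, (ε = 1 ∨ ε = -1) ∧ ε • PauliE 0 z ∈ S) →
      (eps z = 1 ∨ eps z = -1) ∧ eps z • PauliE 0 z ∈ S)
    (θ : ℝ) (a : Fin n → ZMod 2) :
    (∀ v, xi θ ^ wHam (v + a) * (∑ z ∈ Zf S eps, eps z * (-1 : ℂ) ^ dotp v z)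
        = xi θ ^ wHam v * (∑ z ∈ Zf S eps, eps z * (-1 : ℂ) ^ dotp v z))
      ↔ ∀ y, Hfun S eps θ a y = (if y ∈ Zf S eps then eps y else 0) := by
  have hg : ∀ v, (∑ z ∈ Zf S eps, eps z * (-1 : ℂ) ^ dotp v z)
      = ∑ y : Fin n → ZMod 2,
          (if y ∈ Zf S eps then eps y else 0) * (-1 : ℂ) ^ dotp v y := by
    intro v
    symm
    calc ∑ y : Fin n → ZMod 2, (if y ∈ Zf S eps then eps y else 0) * (-1 : ℂ) ^ dotp v y
        = ∑ y : Fin n → ZMod 2,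
            (if y ∈ Zf S eps then eps y * (-1 : ℂ) ^ dotp v y else 0) :=
          Finset.sum_congr rfl fun y _ => by split_ifs <;> ring
      _ = ∑ y ∈ Finset.univ ∩ Zf S eps, eps y * (-1 : ℂ) ^ dotp v y :=
          Finset.sum_ite_mem _ _ _
      _ = ∑ z ∈ Zf S eps, eps z * (-1 : ℂ) ^ dotp v z := by rw [Finset.univ_inter]
  constructor
  · intro h y
    have hf := fourier_inv
      (fun y => Hfun S eps θ a y - (if y ∈ Zf S eps then eps y else 0)) ?_ y
    · exact sub_eq_zero.mp hf
    · intro v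
      have hxne : (xi θ) ^ wHam v ≠ 0 := pow_ne_zero _ (xi_ne_zero θ)
      have h2 : xi θ ^ wHam v *
          (∑ y : Fin n → ZMod 2, Hfun S eps θ a y * (-1 : ℂ) ^ dotp v y)
          = xi θ ^ wHam v * ∑ y : Fin n → ZMod 2,
              (if y ∈ Zf S eps then eps y else 0) * (-1 : ℂ) ^ dotp v y := by
        rw [← core1' θ a v, h v, hg v]
      have h3 := mul_left_cancel₀ hxne h2
      calc ∑ y : Fin n → ZMod 2,
            (Hfun S eps θ a y - (if y ∈ Zf S eps then eps y else 0)) * (-1 : ℂ) ^ dotp v y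
          = (∑ y : Fin n → ZMod 2, Hfun S eps θ a y * (-1 : ℂ) ^ dotp v y)
            - ∑ y : Fin n → ZMod 2,
              (if y ∈ Zf S eps then eps y else 0) * (-1 : ℂ) ^ dotp v y := by
            rw [← Finset.sum_sub_distrib]
            exact Finset.sum_congr rfl fun y _ => by ring
        _ = 0 := by rw [h3, sub_self]
  · intro h v
    rw [core1' θ a v, Finset.sum_congr rfl (fun y _ => by rw [h y]), ← hg v]

lemma core3
    (hone : (1 : Matrix (Fin n → ZMod 2) (Fin n → ZMod 2) ℂ) ∈ S)
    (hmul : ∀ M ∈ S, ∀ M' ∈ S, M * M' ∈ S)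
    (hneg : -(1 : Matrix (Fin n → ZMod 2) (Fin n → ZMod 2) ℂ) ∉ S)
    (heps : ∀ z : Fin n → ZMod 2,
      (∃ ε : ℂ, (ε = 1 ∨ ε = -1) ∧ ε • PauliE 0 z ∈ S) →
      (eps z = 1 ∨ eps z = -1) ∧ eps z • PauliE 0 z ∈ S)
    (θ : ℝ) (a : Fin n → ZMod 2) :
    (∀ y, Hfun S eps θ a y = (if y ∈ Zf S eps then eps y else 0))
      ↔ (Hfun S eps θ a 0 = 1 ∧
          ∀ y, (∀ i, a i = 0 → y i = 0) → y ∉ Zf S eps → Hfun S eps θ a y = 0) := by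
  constructor
  · intro h
    constructor
    · rw [h 0, if_pos (Zf_zero hone hmul hneg heps).1, (Zf_zero hone hmul hneg heps).2]
    · intro y _ hy
      rw [h y, if_neg hy]
  · rintro ⟨h1, h2⟩ y
    by_cases hy : y ∈ Zf S eps
    · have hs := Hshift hmul hneg heps θ a hy 0
      rw [add_zero] at hs
      rw [hs, h1, mul_one, if_pos hy]
    · rw [if_neg hy]
      by_cases hex : ∃ z0 ∈ Zf S eps, (∀ i, a i = 0 → (z0 + y) i = 0)
      · obtain ⟨z0, hz0, hP⟩ := hex
        have hs := Hshift hmul hneg heps θ a hz0 y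
        have hy' : (z0 + y) ∉ Zf S eps := by
          intro hmem
          apply hy
          have := (Zf_add hmul hneg heps hz0 hmem).1
          rwa [add_add_cancel] at this
        rw [h2 (z0 + y) hP hy'] at hs
        exact (mul_eq_zero.mp hs.symm).resolve_left (eps_ne_zero hz0)
      · rw [Hfun]
        exact Finset.sum_eq_zero fun z hz => if_neg (fun hP => hex ⟨z, hz, hP⟩)

lemma Hfun_eq
    (heps : ∀ z : Fin n → ZMod 2,
      (∃ ε : ℂ, (ε = 1 ∨ ε = -1) ∧ ε • PauliE 0 z ∈ S) →
      (eps z = 1 ∨ eps z = -1) ∧ eps z • PauliE 0 z ∈ S)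
    (θ : ℝ) (hcos : Real.cos θ ≠ 0) (a y : Fin n → ZMod 2)
    (hy : ∀ i, a i = 0 → y i = 0) :
    Hfun S eps θ a y = (Real.cos θ : ℂ) ^ wHam a *
      ∑ v : Fin n → ZMod 2, (if v ∈ Zsupp S a then
        eps v * (Complex.I * (Real.tan θ : ℂ)) ^ wHam (v + y) else 0) := by
  rw [Hfun, Finset.mul_sum]
  calc ∑ z ∈ Zf S eps,
        (if (∀ i, a i = 0 → (z + y) i = 0) then eps z * Ccoef θ a (z + y) else 0)
      = ∑ z : Fin n → ZMod 2, (if z ∈ Zf S eps then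
          (if (∀ i, a i = 0 → (z + y) i = 0) then eps z * Ccoef θ a (z + y) else 0)
          else 0) := by
        rw [Finset.sum_ite_mem, Finset.univ_inter]
    _ = ∑ v : Fin n → ZMod 2, (Real.cos θ : ℂ) ^ wHam a *
        (if v ∈ Zsupp S a then eps v * (Complex.I * (Real.tan θ : ℂ)) ^ wHam (v + y) else 0) := by
        refine Finset.sum_congr rfl fun z _ => ?_
        have hmem : (z ∈ Zsupp S a) =
            ((∀ i, a i = 0 → z i = 0) ∧ ∃ ε : ℂ, (ε = 1 ∨ ε = -1) ∧ ε • PauliE 0 z ∈ S) :=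
          rfl
        by_cases hzf : z ∈ Zf S eps
        · by_cases hzp : ∀ i, a i = 0 → z i = 0
          · have hPy : ∀ i, a i = 0 → (z + y) i = 0 := (supp_add hy).mpr hzp
            rw [if_pos hzf, if_pos hPy, Ccoef_eq θ hcos a (z + y) hPy,
              if_pos (show z ∈ Zsupp S a from by
                rw [hmem]; exact ⟨hzp, (mem_Zf_iff heps z).mp hzf⟩)]
            ring
          · rw [if_pos hzf, if_neg (fun hc => hzp ((supp_add hy).mp hc)),
              if_neg (fun hc : z ∈ Zsupp S a => hzp (by rw [hmem] at hc; exact hc.1)),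
              mul_zero]
        · rw [if_neg hzf,
            if_neg (fun hc : z ∈ Zsupp S a => hzf ((mem_Zf_iff heps z).mpr (by
              rw [hmem] at hc; exact hc.2))), mul_zero]

lemma xi_star_mul (θ : ℝ) : star (xi θ) * xi θ = 1 := by
  have hstar : star (xi θ) = (Real.cos θ : ℂ) - Complex.I * (Real.sin θ : ℂ) := by
    rw [xi]
    rw [show (star : ℂ → ℂ) = (starRingEnd ℂ) from rfl]
    rw [map_add, _root_.map_mul, Complex.conj_I, Complex.conj_ofReal, Complex.conj_ofReal]
    ring
  rw [hstar, xi]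
  have h := xi_mul_conj θ
  rw [xi] at h
  linear_combination h

end stab

end TZR

open TZR

/-- The transversal `Z`-rotation `τ_{Iₙ}^{(ℓ)}` (with `θ = 2π/2^ℓ`) preserves the
code projector `Π_S = |S|⁻¹ Σ_{M ∈ S} M` of a stabilizer group `S` if and only if,
for every element `± E(a,b) ∈ S` with `a ≠ 0`:
`Σ_{v ∈ Z_a} ε_v (i tan θ)^{w_H(v)} = (sec θ)^{w_H(a)}` and, for every `y ⪯ a` with
`y ∉ Z_a`, `Σ_{v ∈ Z_a} ε_v (i tan θ)^{w_H(v ⊕ y)} = 0`; here `ε_v` is the (unique)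
sign with `ε_v E(0,v) ∈ S`, specified by the function `eps`. -/
theorem transversal_Zrot_stabilizer (n : ℕ) (hn : 1 ≤ n) (ℓ : ℕ) (hℓ : 3 ≤ ℓ)
    (S : Finset (Matrix (Fin n → ZMod 2) (Fin n → ZMod 2) ℂ))
    (hform : ∀ M ∈ S, ∃ ε : ℂ, (ε = 1 ∨ ε = -1) ∧
      ∃ a b : Fin n → ZMod 2, M = ε • PauliE a b)
    (hone : (1 : Matrix (Fin n → ZMod 2) (Fin n → ZMod 2) ℂ) ∈ S)
    (hmul : ∀ M ∈ S, ∀ M' ∈ S, M * M' ∈ S)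
    (hcomm : ∀ M ∈ S, ∀ M' ∈ S, M * M' = M' * M)
    (hneg : -(1 : Matrix (Fin n → ZMod 2) (Fin n → ZMod 2) ℂ) ∉ S)
    (eps : (Fin n → ZMod 2) → ℂ)
    (heps : ∀ z : Fin n → ZMod 2,
      (∃ ε : ℂ, (ε = 1 ∨ ε = -1) ∧ ε • PauliE 0 z ∈ S) →
      (eps z = 1 ∨ eps z = -1) ∧ eps z • PauliE 0 z ∈ S) :
    (tauI n ℓ * ((S.card : ℂ)⁻¹ • ∑ M ∈ S, M) * (tauI n ℓ)ᴴ =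
        (S.card : ℂ)⁻¹ • ∑ M ∈ S, M) ↔
      (∀ (ε : ℂ) (a b : Fin n → ZMod 2), (ε = 1 ∨ ε = -1) →
        ε • PauliE a b ∈ S → a ≠ 0 →
        ((∑ v : Fin n → ZMod 2, if v ∈ Zsupp S a then
            eps v * (Complex.I * (Real.tan (2 * Real.pi / 2 ^ ℓ) : ℂ)) ^ wHam v else 0) =
          ((Real.cos (2 * Real.pi / 2 ^ ℓ) : ℂ))⁻¹ ^ wHam a ∧
        ∀ y : Fin n → ZMod 2, (∀ i, a i = 0 → y i = 0) → y ∉ Zsupp S a →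
          (∑ v : Fin n → ZMod 2, if v ∈ Zsupp S a then
            eps v * (Complex.I * (Real.tan (2 * Real.pi / 2 ^ ℓ) : ℂ)) ^ wHam (v + y)
          else 0) = 0)) := by
  classical
  set θ : ℝ := 2 * Real.pi / 2 ^ ℓ with hθdef
  have hπ := Real.pi_pos
  have h2l : (8 : ℝ) ≤ 2 ^ ℓ := by
    calc (8 : ℝ) = 2 ^ 3 := by norm_num
      _ ≤ 2 ^ ℓ := by apply pow_le_pow_right₀ (by norm_num) hℓ
  have hθpos : 0 < θ := by rw [hθdef]; positivity
  have hθlt : θ < Real.pi / 2 := by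
    have h1 : θ ≤ 2 * Real.pi / 8 := by
      rw [hθdef]
      apply div_le_div_of_nonneg_left (by linarith) (by norm_num) h2l
    linarith
  have hcos : Real.cos θ ≠ 0 :=
    ne_of_gt (Real.cos_pos_of_mem_Ioo ⟨by linarith, hθlt⟩)
  have hcosC : (Real.cos θ : ℂ) ≠ 0 := Complex.ofReal_ne_zero.mpr hcos
  set ξ : ℂ := TZR.xi θ with hξdef
  have hxi : Complex.exp (2 * (Real.pi : ℂ) * Complex.I / 2 ^ ℓ) = ξ := by
    rw [show (2 * (Real.pi : ℂ) * Complex.I / 2 ^ ℓ) = ((θ : ℝ) : ℂ) * Complex.I by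
      rw [hθdef]; push_cast; ring]
    rw [Complex.exp_mul_I, hξdef, TZR.xi, ← Complex.ofReal_cos, ← Complex.ofReal_sin]
    ring
  have hcard : ((S.card : ℂ))⁻¹ ≠ 0 :=
    inv_ne_zero (Nat.cast_ne_zero.mpr (Finset.card_ne_zero_of_mem hone))
  have hss : ∀ k : ℕ, star (ξ ^ k) * ξ ^ k = 1 := by
    intro k
    rw [star_pow, ← mul_pow, hξdef, TZR.xi_star_mul, one_pow]
  -- entry formula for the conjugated projector
  have hMuv : ∀ u v : Fin n → ZMod 2,
      (tauI n ℓ * ((S.card : ℂ)⁻¹ • ∑ M ∈ S, M) * (tauI n ℓ)ᴴ) u v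
        = (S.card : ℂ)⁻¹ *
            (ξ ^ wHam u * (∑ M ∈ S, M u v) * star (ξ ^ wHam v)) := by
    intro u v
    rw [tauI, Matrix.diagonal_conjTranspose, Matrix.mul_diagonal, Matrix.diagonal_mul,
      Pi.star_apply, hxi, Matrix.smul_apply, Matrix.sum_apply, smul_eq_mul]
    ring
  have hRuv : ∀ u v : Fin n → ZMod 2,
      ((S.card : ℂ)⁻¹ • ∑ M ∈ S, M) u v = (S.card : ℂ)⁻¹ * (∑ M ∈ S, M u v) := by
    intro u v
    rw [Matrix.smul_apply, Matrix.sum_apply, smul_eq_mul]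
  -- matrix equation ⇔ pointwise phase condition
  have hiff : (tauI n ℓ * ((S.card : ℂ)⁻¹ • ∑ M ∈ S, M) * (tauI n ℓ)ᴴ =
        (S.card : ℂ)⁻¹ • ∑ M ∈ S, M)
      ↔ ∀ u v : Fin n → ZMod 2,
          ξ ^ wHam u * (∑ M ∈ S, M u v) = ξ ^ wHam v * (∑ M ∈ S, M u v) := by
    constructor
    · intro h u v
      have h1 := congrFun (congrFun h u) v
      rw [hMuv u v, hRuv u v] at h1
      have h2 := mul_left_cancel₀ hcard h1
      set T : ℂ := ∑ M ∈ S, M u v with hTdef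
      calc ξ ^ wHam u * T
          = ξ ^ wHam u * T * (star (ξ ^ wHam v) * ξ ^ wHam v) := by rw [hss, mul_one]
        _ = (ξ ^ wHam u * T * star (ξ ^ wHam v)) * ξ ^ wHam v := by ring
        _ = T * ξ ^ wHam v := by rw [h2]
        _ = ξ ^ wHam v * T := by ring
    · intro h
      ext u v
      rw [hMuv u v, hRuv u v]
      congr 1
      set T : ℂ := ∑ M ∈ S, M u v with hTdef
      have hvv : ξ ^ wHam v * star (ξ ^ wHam v) = 1 := by
        rw [mul_comm]; exact hss _
      calc ξ ^ wHam u * T * star (ξ ^ wHam v)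
          = ξ ^ wHam v * T * star (ξ ^ wHam v) := by rw [h u v]
        _ = T * (ξ ^ wHam v * star (ξ ^ wHam v)) := by ring
        _ = T := by rw [hvv, mul_one]
  -- master entry formula
  have hmaster : ∀ (ε : ℂ) (a b : Fin n → ZMod 2), (ε = 1 ∨ ε = -1) →
      ε • PauliE a b ∈ S → ∀ v : Fin n → ZMod 2,
      (∑ M ∈ S, M (v + a) v)
        = (ε * Complex.I ^ (dotp a b % 4) * (-1 : ℂ) ^ dotp v b) *
            (∑ z ∈ Zf S eps, eps z * (-1 : ℂ) ^ dotp (v + a) z) := by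
    intro ε a b hε hN v
    rw [TZR.sum_shift hmul hε hN (v + a) v, TZR.diag_sum hform hmul hneg heps (v + a)]
  have hKne : ∀ (ε : ℂ), (ε = 1 ∨ ε = -1) → ∀ (a b v : Fin n → ZMod 2),
      ε * Complex.I ^ (dotp a b % 4) * (-1 : ℂ) ^ dotp v b ≠ 0 := by
    intro ε hε a b v
    have hεne : ε ≠ 0 := by rcases hε with h | h <;> rw [h] <;> norm_num
    exact mul_ne_zero (mul_ne_zero hεne (pow_ne_zero _ Complex.I_ne_zero))
      (pow_ne_zero _ (by norm_num))
  constructor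
  · -- forward direction
    intro hmat ε a b hε hmem ha
    have hpw := hiff.mp hmat
    -- pointwise identity for g
    have hgid : ∀ v : Fin n → ZMod 2,
        ξ ^ wHam (v + a) * (∑ z ∈ Zf S eps, eps z * (-1 : ℂ) ^ dotp v z)
          = ξ ^ wHam v * (∑ z ∈ Zf S eps, eps z * (-1 : ℂ) ^ dotp v z) := by
      intro v
      have hvaa : v + a + a = v := by rw [add_assoc, add_self_zero, add_zero]
      have hw := hpw (v + a + a) (v + a)
      have hm := hmaster ε a b hε hmem (v + a)
      rw [hvaa] at hm hw
      -- hw : ξ^{wHam v} * Σ_M M v (v+a) = ξ^{wHam (v+a)} * Σ_M M v (v+a)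
      rw [hm] at hw
      have hK := hKne ε hε a b (v + a)
      refine (mul_left_cancel₀ hK ?_).symm
      linear_combination hw
    have hHall := (TZR.core2 hmul hneg heps θ a).mp hgid
    have hcore := (TZR.core3 hone hmul hneg heps θ a).mp hHall
    constructor
    · have hH0 := TZR.Hfun_eq (S := S) (eps := eps) heps θ hcos a 0 (fun i _ => rfl)
      rw [hcore.1] at hH0
      have hsum : (∑ v : Fin n → ZMod 2, if v ∈ Zsupp S a then
            eps v * (Complex.I * (Real.tan θ : ℂ)) ^ wHam (v + 0) else 0)
          = ∑ v : Fin n → ZMod 2, if v ∈ Zsupp S a then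
            eps v * (Complex.I * (Real.tan θ : ℂ)) ^ wHam v else 0 :=
        Finset.sum_congr rfl fun v _ => by rw [add_zero]
      rw [hsum] at hH0
      rw [inv_pow]
      exact (inv_eq_of_mul_eq_one_right hH0.symm).symm
    · intro y hyP hyZs
      have hyZ : y ∉ Zf S eps := fun hmem => hyZs ⟨hyP, (TZR.mem_Zf_iff heps y).mp hmem⟩
      have hHy := hcore.2 y hyP hyZ
      rw [TZR.Hfun_eq (S := S) (eps := eps) heps θ hcos a y hyP] at hHy
      exact (mul_eq_zero.mp hHy).resolve_left (pow_ne_zero _ hcosC)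
  · -- backward direction
    intro hcond
    apply hiff.mpr
    intro u v
    by_cases hT : (∑ M ∈ S, M u v) = 0
    · rw [hT, mul_zero, mul_zero]
    · obtain ⟨M, hM, hMne⟩ := Finset.exists_ne_zero_of_sum_ne_zero hT
      obtain ⟨ε, hε, a, b, rfl⟩ := hform M hM
      have hu : u = v + a := by
        by_contra hne
        apply hMne
        rw [Matrix.smul_apply, TZR.pauli_apply, if_neg hne, mul_zero, smul_zero]
      subst hu
      rcases eq_or_ne a 0 with ha | ha
      · subst ha
        rw [add_zero]
      · have hc := hcond ε a b hε hM ha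
        have hH0 : Hfun S eps θ a 0 = 1 := by
          rw [TZR.Hfun_eq (S := S) (eps := eps) heps θ hcos a 0 (fun i _ => rfl)]
          have hsum : (∑ w : Fin n → ZMod 2, if w ∈ Zsupp S a then
                eps w * (Complex.I * (Real.tan θ : ℂ)) ^ wHam (w + 0) else 0)
              = ∑ w : Fin n → ZMod 2, if w ∈ Zsupp S a then
                eps w * (Complex.I * (Real.tan θ : ℂ)) ^ wHam w else 0 :=
            Finset.sum_congr rfl fun w _ => by rw [add_zero]
          rw [hsum, hc.1, inv_pow, mul_inv_cancel₀ (pow_ne_zero _ hcosC)]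
        have hrest : ∀ y : Fin n → ZMod 2, (∀ i, a i = 0 → y i = 0) →
            y ∉ Zf S eps → Hfun S eps θ a y = 0 := by
          intro y hyP hyZ
          have hyZs : y ∉ Zsupp S a := fun hmemS =>
            hyZ ((TZR.mem_Zf_iff heps y).mpr hmemS.2)
          have h2 := hc.2 y hyP hyZs
          rw [TZR.Hfun_eq (S := S) (eps := eps) heps θ hcos a y hyP, h2, mul_zero]
        have hHall := (TZR.core3 hone hmul hneg heps θ a).mpr ⟨hH0, hrest⟩
        have hgid := (TZR.core2 hmul hneg heps θ a).mpr hHall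
        have hvaa : v + a + a = v := by rw [add_assoc, add_self_zero, add_zero]
        have hm := hmaster ε a b hε hM v
        rw [hm]
        have hg2 := hgid (v + a)
        rw [hvaa] at hg2
        linear_combination (-(ε * Complex.I ^ (dotp a b % 4) * (-1 : ℂ) ^ dotp v b)) * hg2


end
end

section
/- Let m be an even positive integer, let ℓ ≥ 3 be an integer, set θ = 2π/2^ℓ, and let C ⊆ F₂^m be a self-dual code, i.e. a linear code with dim C = m/2 and C = C^⊥. Then Σ_{v ∈ C} (i tan θ)^{w_H(v)} = (sec θ)^m if and only if 2^ℓ divides m − 2·w_H(v) for every v ∈ C. -/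
/-!
Write `W_S(x, y) = Σ_{v ∈ S} x^(m - wt v) y^(wt v)`. For a self-dual code `C` the MacWilliams
identity reads `W_C(x + y, x - y) = |C| W_C(x, y)`. Take `x = cos θ`, `y = i sin θ`, so that
`x ± y = ζ^(±1)` with `ζ = e^(iθ)` a primitive `2^ℓ`-th root of unity. The left side becomes
`Σ_{v ∈ C} ζ^(m - 2 wt v)` and the right side `|C| cos^m θ Σ_{v ∈ C} (i tan θ)^(wt v)`, so the
tangent sum equals `sec^m θ` iff the `|C|` unit complex numbers `ζ^(m - 2 wt v)` sum to `|C|`,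
i.e. iff each of them is `1`, i.e. iff `2^ℓ ∣ m - 2 wt v` for all `v ∈ C`.
-/

open scoped Classical

noncomputable section

/-- Integer dot product of the 0/1 representatives of two binary vectors. -/
def dotN {n : ℕ} (a b : Fin n → ZMod 2) : ℕ := ∑ i, (a i).val * (b i).val

open Finset

variable {n : ℕ}

lemma ZMod.eq_zero_or_eq_one_of_two (a : ZMod 2) : a = 0 ∨ a = 1 := by
  revert a; decide

def signChar : AddChar (ZMod 2) ℂ := AddChar.zmodChar 2 (by norm_num : (-1 : ℂ) ^ 2 = 1)

lemma signChar_one : signChar 1 = -1 := by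
  rw [signChar, AddChar.zmodChar_apply, show (1 : ZMod 2).val = 1 from rfl, pow_one]

lemma signChar_eq_one_iff {a : ZMod 2} : signChar a = 1 ↔ a = 0 := by
  rcases a.eq_zero_or_eq_one_of_two with rfl | rfl <;> norm_num [signChar_one]

lemma signChar_mul (a : ZMod 2) (y : ℂ) : signChar a * y = if a = 0 then y else -y := by
  rcases a.eq_zero_or_eq_one_of_two with rfl | rfl <;> simp [signChar_one]

lemma AddChar.map_sum_eq_prod {ι A M : Type*} [AddCommMonoid A] [CommMonoid M] (ψ : AddChar A M)
    (s : Finset ι) (f : ι → A) : ψ (∑ i ∈ s, f i) = ∏ i ∈ s, ψ (f i) := by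
  induction s using Finset.cons_induction with
  | empty => simp
  | cons a s ha ih => rw [sum_cons, prod_cons, AddChar.map_add_eq_mul, ih]

lemma sum_signChar_dotProduct {ι : Type*} [Fintype ι] [DecidableEq ι]
    (C : Submodule (ZMod 2) (ι → ZMod 2)) (w : ι → ZMod 2) :
    ∑ v ∈ {v | v ∈ C}, signChar (v ⬝ᵥ w) =
      if ∀ v ∈ C, v ⬝ᵥ w = 0 then (#{v | v ∈ C} : ℂ) else 0 := by
  let ψ : AddChar C ℂ := signChar.compAddMonoidHom
    (AddMonoidHom.mk' (fun v : C => (v : ι → ZMod 2) ⬝ᵥ w) fun a b => add_dotProduct _ _ _)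
  have hψ : ψ = 0 ↔ ∀ v ∈ C, v ⬝ᵥ w = 0 := by
    simp [ψ, AddChar.eq_zero_iff, signChar_eq_one_iff]
  rw [sum_subtype _ (fun v => mem_filter_univ v), ← Fintype.card_subtype]
  exact ψ.sum_eq_ite.trans (if_congr hψ rfl rfl)

lemma wHam_eq_card (v : Fin n → ZMod 2) : wHam v = #{j | v j ≠ 0} := by
  rw [wHam, card_filter]
  refine sum_congr rfl fun j _ => ?_
  rcases (v j).eq_zero_or_eq_one_of_two with h | h <;> simp [h, ZMod.val_one]

lemma prod_ite_eq_pow_wHam {M : Type*} [CommMonoid M] (v : Fin n → ZMod 2) (a b : M) :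
    ∏ j, (if v j = 0 then a else b) = a ^ (n - wHam v) * b ^ wHam v := by
  have hcard := card_filter_add_card_filter_not (s := univ) (fun j => v j = 0)
  rw [card_univ, Fintype.card_fin] at hcard
  rw [prod_ite, prod_const, prod_const, wHam_eq_card]
  simp only [ne_eq]
  congr 2
  omega

lemma wHam_le (v : Fin n → ZMod 2) : wHam v ≤ n :=
  wHam_eq_card v ▸ (card_filter_le _ _).trans (by simp)

def weightEnumerator {R : Type*} [CommSemiring R] (S : Finset (Fin n → ZMod 2)) (x y : R) : R :=
  ∑ v ∈ S, x ^ (n - wHam v) * y ^ wHam v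

lemma prod_add_signChar_mul (v : Fin n → ZMod 2) (x y : ℂ) :
    ∏ j, (x + signChar (v j) * y) = (x + y) ^ (n - wHam v) * (x - y) ^ wHam v := by
  simp_rw [signChar_mul, apply_ite (x + ·), ← sub_eq_add_neg, prod_ite_eq_pow_wHam]

lemma prod_add_signChar_mul_eq_sum (v : Fin n → ZMod 2) (x y : ℂ) :
    ∏ j, (x + signChar (v j) * y) =
      ∑ w, signChar (v ⬝ᵥ w) * (x ^ (n - wHam w) * y ^ wHam w) := by
  have hcoord (a : ZMod 2) :
      x + signChar a * y = ∑ b : ZMod 2, signChar (a * b) * (if b = 0 then x else y) := by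
    rw [show (univ : Finset (ZMod 2)) = {0, 1} from rfl, sum_pair zero_ne_one]
    simp
  simp_rw [hcoord, Fintype.prod_sum, prod_mul_distrib, ← AddChar.map_sum_eq_prod,
    prod_ite_eq_pow_wHam, dotProduct]

/-- The MacWilliams identity. -/
theorem weightEnumerator_add_sub (C : Submodule (ZMod 2) (Fin n → ZMod 2)) (x y : ℂ) :
    weightEnumerator {v | v ∈ C} (x + y) (x - y) =
      #{v | v ∈ C} * weightEnumerator {w | ∀ v ∈ C, v ⬝ᵥ w = 0} x y := by
  calc weightEnumerator {v | v ∈ C} (x + y) (x - y)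
      = ∑ v ∈ {v | v ∈ C}, ∑ w, signChar (v ⬝ᵥ w) * (x ^ (n - wHam w) * y ^ wHam w) := by
        simp_rw [weightEnumerator, ← prod_add_signChar_mul, prod_add_signChar_mul_eq_sum]
    _ = ∑ w, (∑ v ∈ {v | v ∈ C}, signChar (v ⬝ᵥ w)) * (x ^ (n - wHam w) * y ^ wHam w) := by
        rw [sum_comm]; simp_rw [sum_mul]
    _ = ∑ w, if ∀ v ∈ C, v ⬝ᵥ w = 0 then
          (#{v | v ∈ C} : ℂ) * (x ^ (n - wHam w) * y ^ wHam w) else 0 := by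
        simp_rw [sum_signChar_dotProduct, ite_mul, zero_mul]
    _ = _ := by
        rw [← sum_filter, weightEnumerator, mul_sum]

lemma two_dvd_dotN_iff (a b : Fin n → ZMod 2) : 2 ∣ dotN a b ↔ a ⬝ᵥ b = 0 := by
  have hcast : (dotN a b : ZMod 2) = a ⬝ᵥ b := by
    simp [dotN, dotProduct, ZMod.natCast_val, ZMod.cast_id]
  rw [← hcast, ZMod.natCast_eq_zero_iff]

theorem weightEnumerator_add_sub_of_selfDual (C : Submodule (ZMod 2) (Fin n → ZMod 2))
    (hsd : ∀ y, y ∈ C ↔ ∀ x ∈ C, 2 ∣ dotN x y) (x y : ℂ) :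
    weightEnumerator {v | v ∈ C} (x + y) (x - y) =
      #{v | v ∈ C} * weightEnumerator {v | v ∈ C} x y := by
  rw [weightEnumerator_add_sub]
  congr 3
  ext w
  simp [hsd w, two_dvd_dotN_iff]

lemma weightEnumerator_mul_right {R : Type*} [CommSemiring R] (S : Finset (Fin n → ZMod 2))
    (x t : R) : weightEnumerator S x (x * t) = x ^ n * ∑ v ∈ S, t ^ wHam v := by
  rw [weightEnumerator, mul_sum]
  refine sum_congr rfl fun v _ => ?_
  rw [mul_pow, ← mul_assoc, ← pow_add, Nat.sub_add_cancel (wHam_le v)]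

lemma weightEnumerator_inv {K : Type*} [Field K] (S : Finset (Fin n → ZMod 2)) {ζ : K}
    (hζ : ζ ≠ 0) : weightEnumerator S ζ ζ⁻¹ = ∑ v ∈ S, ζ ^ ((n : ℤ) - 2 * wHam v) := by
  refine sum_congr rfl fun v _ => ?_
  rw [← zpow_natCast, ← zpow_natCast, inv_zpow', ← zpow_add₀ hζ, Nat.cast_sub (wHam_le v)]
  ring_nf

lemma Complex.sum_eq_card_iff_forall_eq_one {ι : Type*} {s : Finset ι} {f : ι → ℂ}
    (hf : ∀ i ∈ s, ‖f i‖ = 1) : ∑ i ∈ s, f i = #s ↔ ∀ i ∈ s, f i = 1 := by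
  refine ⟨fun h => ?_, fun h => by simp [sum_congr rfl h]⟩
  have hre_le : ∀ i ∈ s, (f i).re ≤ 1 := fun i hi => hf i hi ▸ re_le_norm (f i)
  have hre : ∀ i ∈ s, (f i).re = 1 := by
    refine (sum_eq_sum_iff_of_le hre_le).1 ?_
    simpa using congrArg re h
  intro i hi
  have him : 0 = (f i).im := (nonneg_iff.1 (re_eq_norm.1 (by rw [hre i hi, hf i hi]))).2
  exact Complex.ext (hre i hi) him.symm

lemma cos_two_pi_div_two_pow_pos {ℓ : ℕ} (hℓ : 3 ≤ ℓ) : 0 < Real.cos (2 * Real.pi / 2 ^ ℓ) := by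
  have h8 : (2 : ℝ) ^ 3 ≤ 2 ^ ℓ := pow_le_pow_right₀ (by norm_num) hℓ
  have hpos : 0 < 2 * Real.pi / 2 ^ ℓ := by positivity
  refine Real.cos_pos_of_mem_Ioo ⟨by linarith [Real.pi_pos], ?_⟩
  rw [div_lt_div_iff₀ (by positivity) (by norm_num)]
  nlinarith [Real.pi_pos]

lemma Complex.exp_ofReal_mul_I_eq_cos_add {θ : ℝ} (hc : Real.cos θ ≠ 0) :
    Complex.exp (θ * Complex.I) = Real.cos θ + Real.cos θ * (Complex.I * Real.tan θ) := by
  have hc' : Complex.cos θ ≠ 0 := by exact_mod_cast hc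
  rw [Complex.exp_mul_I, Real.tan_eq_sin_div_cos]
  push_cast
  field_simp

lemma Complex.exp_ofReal_mul_I_inv_eq_cos_sub {θ : ℝ} (hc : Real.cos θ ≠ 0) :
    (Complex.exp (θ * Complex.I))⁻¹ = Real.cos θ - Real.cos θ * (Complex.I * Real.tan θ) := by
  rw [← Complex.exp_neg, ← neg_mul, ← Complex.ofReal_neg, Complex.exp_ofReal_mul_I_eq_cos_add
    (by rwa [Real.cos_neg]), Real.cos_neg, Real.tan_neg]
  push_cast
  ring

open Complex in
theorem selfdual_tangent_sum_general (m : ℕ) (ℓ : ℕ) (hℓ : 3 ≤ ℓ)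
    (C : Submodule (ZMod 2) (Fin m → ZMod 2))
    (hsd : ∀ y : Fin m → ZMod 2, y ∈ C ↔ ∀ x ∈ C, 2 ∣ dotN x y) :
    ((∑ v : Fin m → ZMod 2, if v ∈ C then
        (Complex.I * (Real.tan (2 * Real.pi / 2 ^ ℓ) : ℂ)) ^ wHam v else 0) =
      ((Real.cos (2 * Real.pi / 2 ^ ℓ) : ℂ))⁻¹ ^ m) ↔
    (∀ v : Fin m → ZMod 2, v ∈ C → (2 ^ ℓ : ℤ) ∣ ((m : ℤ) - 2 * (wHam v : ℤ))) := by
  set θ : ℝ := 2 * Real.pi / 2 ^ ℓ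
  set ζ : ℂ := exp (θ * I)
  have hc : Real.cos θ ≠ 0 := (cos_two_pi_div_two_pow_pos hℓ).ne'
  have hζ : IsPrimitiveRoot ζ (2 ^ ℓ) := by
    convert isPrimitiveRoot_exp (2 ^ ℓ) (by positivity) using 2
    push_cast [θ]
    ring
  have hcard : (#{v | v ∈ C} : ℂ) ≠ 0 := Nat.cast_ne_zero.2 (card_ne_zero.2 ⟨0, by simp⟩)
  have key : #{v | v ∈ C} * ((Real.cos θ : ℂ) ^ m * ∑ v ∈ {v | v ∈ C}, (I * Real.tan θ) ^ wHam v)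
      = ∑ v ∈ {v | v ∈ C}, ζ ^ ((m : ℤ) - 2 * wHam v) := by
    rw [← weightEnumerator_mul_right, ← weightEnumerator_add_sub_of_selfDual C hsd,
      ← exp_ofReal_mul_I_eq_cos_add hc, ← exp_ofReal_mul_I_inv_eq_cos_sub hc,
      weightEnumerator_inv _ (exp_ne_zero _)]
  have hnorm : ∀ v ∈ ({v | v ∈ C} : Finset _), ‖ζ ^ ((m : ℤ) - 2 * wHam v)‖ = 1 := fun v _ => by
    rw [norm_zpow, norm_exp_ofReal_mul_I, one_zpow]
  rw [← sum_filter, inv_pow, ← mul_eq_one_iff_eq_inv₀ (pow_ne_zero _ (ofReal_ne_zero.2 hc)),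
    mul_comm, ← mul_right_inj' hcard, mul_one, key, sum_eq_card_iff_forall_eq_one hnorm]
  simp only [mem_filter_univ, hζ.zpow_eq_one_iff_dvd, Nat.cast_pow, Nat.cast_ofNat]

/-- For an `[m, m/2]` self-dual binary code `C` and `θ = 2π/2^ℓ` (`ℓ ≥ 3`),
`Σ_{v ∈ C} (i tan θ)^{w_H(v)} = (sec θ)^m` if and only if `2^ℓ` divides
`m − 2 w_H(v)` for every `v ∈ C`. -/
theorem selfdual_tangent_sum (m : ℕ) (hm : Even m) (hm0 : 0 < m) (ℓ : ℕ) (hℓ : 3 ≤ ℓ)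
    (C : Submodule (ZMod 2) (Fin m → ZMod 2))
    (hdim : 2 * Module.finrank (ZMod 2) C = m)
    (hsd : ∀ y : Fin m → ZMod 2, y ∈ C ↔ ∀ x ∈ C, 2 ∣ dotN x y) :
    ((∑ v : Fin m → ZMod 2, if v ∈ C then
        (Complex.I * (Real.tan (2 * Real.pi / 2 ^ ℓ) : ℂ)) ^ wHam v else 0) =
      ((Real.cos (2 * Real.pi / 2 ^ ℓ) : ℂ))⁻¹ ^ m) ↔
    (∀ v : Fin m → ZMod 2, v ∈ C → (2 ^ ℓ : ℤ) ∣ ((m : ℤ) - 2 * (wHam v : ℤ))) :=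
  selfdual_tangent_sum_general m ℓ hℓ C hsd

end
end
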